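/- arXiv:2203.10635 — 9 statements merged into one kernel-verified Lean document; each statement's English description precedes it below -/
import Mathlib

section
/- Let A be the (d-1)×d real matrix formed by the first d-1 rows of a d×d orthogonal matrix. Let c be the first column of A and B the (d-1)×(d-1) matrix formed by the remaining columns. Then (det B)^2 = 1 - ‖c‖². -/
/-- The first `d-1` rows of an orthogonal `d × d` matrix: if `c` is the first
column of this `(d-1) × d` block and `B` the remaining square block, then
`(det B)^2 = 1 - ‖c‖²`. Here `d = n + 1`. -/
theorem det_block_sq_eq_one_sub_norm_sq (n : ℕ)
    (M : Matrix (Fin (n + 1)) (Fin (n + 1)) ℝ)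
    (hM : M * M.transpose = 1)
    (c : Fin n → ℝ) (hc : ∀ i : Fin n, c i = M i.castSucc 0)
    (B : Matrix (Fin n) (Fin n) ℝ)
    (hB : ∀ (i j : Fin n), B i j = M i.castSucc j.succ) :
    (B.det) ^ 2 = 1 - ∑ i, (c i) ^ 2 := by
  have key : B * B.transpose = 1 + Matrix.replicateCol Unit c * Matrix.replicateRow Unit (-c) := by
    ext i j
    have h1 : (M * M.transpose) i.castSucc j.castSucc
        = (1 : Matrix (Fin (n+1)) (Fin (n+1)) ℝ) i.castSucc j.castSucc := by rw [hM]
    simp only [Matrix.mul_apply, Matrix.transpose_apply] at h1 ⊢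
    rw [Fin.sum_univ_succ] at h1
    have hone : (1 : Matrix (Fin (n+1)) (Fin (n+1)) ℝ) i.castSucc j.castSucc
        = (1 : Matrix (Fin n) (Fin n) ℝ) i j := by
      simp [Matrix.one_apply, Fin.castSucc_inj]
    rw [hone] at h1
    simp only [Matrix.add_apply, Matrix.replicateCol_apply, Matrix.replicateRow_apply, Pi.neg_apply,
      hB, hc]
    have : ∀ x : Fin n, M i.castSucc x.succ * M j.castSucc x.succ
        = M i.castSucc x.succ * M j.castSucc x.succ := fun _ => rfl
    rw [Matrix.mul_apply]
    simp only [Matrix.replicateCol_apply, Matrix.replicateRow_apply, Pi.neg_apply, Finset.univ_unique,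
      Finset.sum_singleton, hc]
    linarith [h1]
  have hdet : B.det ^ 2 = (B * B.transpose).det := by
    rw [Matrix.det_mul, Matrix.det_transpose, sq]
  rw [hdet, key, Matrix.det_one_add_replicateCol_mul_replicateRow]
  simp [dotProduct, sq, sub_eq_add_neg]
end

section
/- Let d be even and let M be a (d-1)×d integer matrix whose rows are pairwise orthogonal vectors of squared norm N > 0. Define the row vector w by w_j = (-1)^j N^{(2-d)/2} det(M_{(j)}), where M_{(j)} is M with the j-th column deleted. Then w has integer entries, is orthogonal to every row of M, and ‖w‖² = N. -/
/-!
The signed maximal minors `v j = (-1)^j det M_{(j)}` are orthogonal to every row of `M`: pairing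
`v` with a row is the Laplace expansion of a determinant with a repeated row. Deleting column `j`
leaves a matrix `B` with `B Bᵀ = N • 1 - c cᵀ`, `c` the deleted column, so the matrix determinant
lemma gives `det B ^ 2 = N ^ (d - 2) (N - |c|²)`. For `d = 2m + 2` this makes `(N^m)²` divide
`(v j)²`, hence `N^m ∣ v j` and `w = v / N^m` is integral. Summing over `j`, the squared column
norms add up to `(d - 1) N`, so `|v|² = N^(d - 1)` and `|w|² = N`.
-/

namespace Matrix

section CommRing

variable {R : Type*} [CommRing R]

theorem sum_neg_one_pow_mul_det_submatrix_succAbove_eq_zero {n : ℕ}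
    (M : Matrix (Fin n) (Fin (n + 1)) R) (i : Fin n) :
    ∑ j : Fin (n + 1), (-1) ^ (j : ℕ) * M i j * (M.submatrix id j.succAbove).det = 0 := by
  let A : Matrix (Fin (n + 1)) (Fin (n + 1)) R := of (Fin.cons (M i) M)
  have hA : A.det = 0 := det_zero_of_row_eq (Fin.succ_ne_zero i).symm rfl
  rw [det_succ_row_zero] at hA
  exact hA

theorem submatrix_succAbove_mul_transpose {m : Type*} [Fintype m] {n : ℕ}
    (M : Matrix m (Fin (n + 1)) R) (j : Fin (n + 1)) :
    M.submatrix id j.succAbove * (M.submatrix id j.succAbove)ᵀ =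
      M * Mᵀ - vecMulVec (fun i => M i j) (fun i => M i j) := by
  ext i i'
  simp only [mul_apply, sub_apply, transpose_apply, submatrix_apply, id_eq, vecMulVec_apply,
    Fin.sum_univ_succAbove _ j]
  ring

end CommRing

section Field

variable {K : Type*} [Field K]

theorem det_smul_one_sub_vecMulVec_self_mul {m : Type*} [Fintype m] [DecidableEq m] {N : K}
    (hN : N ≠ 0) (c : m → K) :
    (N • (1 : Matrix m m K) - vecMulVec c c).det * N = N ^ Fintype.card m * (N - c ⬝ᵥ c) := by
  have h : N • (1 : Matrix m m K) - vecMulVec c c =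
      N • (1 + replicateCol Unit (-N⁻¹ • c) * replicateRow Unit c) := by
    rw [← vecMulVec_eq, smul_add, smul_vecMulVec, smul_smul, mul_neg, mul_inv_cancel₀ hN,
      neg_one_smul, ← sub_eq_add_neg]
  rw [h, det_smul, det_one_add_replicateCol_mul_replicateRow, dotProduct_smul, smul_eq_mul]
  field_simp
  ring

variable {n : ℕ} {N : K} (hN : N ≠ 0) (M : Matrix (Fin n) (Fin (n + 1)) K) (hM : M * Mᵀ = N • 1)
include hN hM

theorem det_submatrix_succAbove_sq_mul (j : Fin (n + 1)) :
    (M.submatrix id j.succAbove).det ^ 2 * N = N ^ n * (N - ∑ i, M i j ^ 2) := by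
  have hc : (fun i => M i j) ⬝ᵥ (fun i => M i j) = ∑ i, M i j ^ 2 := by
    simp only [dotProduct, sq]
  have hB : (M.submatrix id j.succAbove).det ^ 2 =
      (M.submatrix id j.succAbove * (M.submatrix id j.succAbove)ᵀ).det := by
    rw [det_mul, det_transpose, sq]
  rw [hB, submatrix_succAbove_mul_transpose, hM, det_smul_one_sub_vecMulVec_self_mul hN, hc,
    Fintype.card_fin]

theorem sum_sq_det_submatrix_succAbove :
    ∑ j : Fin (n + 1), (M.submatrix id j.succAbove).det ^ 2 = N ^ n := by
  have hrow : ∀ i, ∑ j, M i j ^ 2 = N := fun i => by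
    simpa [mul_apply, sq] using congrFun (congrFun hM i) i
  refine mul_right_cancel₀ hN ?_
  rw [Finset.sum_mul, Finset.sum_congr rfl fun j _ => det_submatrix_succAbove_sq_mul hN M hM j,
    ← Finset.mul_sum, Finset.sum_sub_distrib, Finset.sum_comm,
    Finset.sum_congr rfl fun i _ => hrow i]
  simp only [Finset.sum_const, Finset.card_univ, Fintype.card_fin, nsmul_eq_mul]
  push_cast
  ring

end Field

theorem map_intCast_mul_transpose_eq_smul_one {R : Type*} [CommRing R] {m l : Type*} [Fintype l]
    [DecidableEq m] {M : Matrix m l ℤ} {N : ℤ} (hM : M * Mᵀ = N • 1) :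
    M.map (Int.cast : ℤ → R) * (M.map (Int.cast : ℤ → R))ᵀ = (N : R) • 1 := by
  ext i i'
  simpa [mul_apply, one_apply, apply_ite] using
    congrArg (Int.cast : ℤ → R) (congrFun (congrFun hM i) i')

theorem pow_dvd_det_submatrix_succAbove {m : ℕ} {N : ℤ} (hN : N ≠ 0)
    (M : Matrix (Fin (2 * m + 1)) (Fin (2 * m + 1 + 1)) ℤ) (hM : M * Mᵀ = N • 1)
    (j : Fin (2 * m + 1 + 1)) :
    N ^ m ∣ (M.submatrix id j.succAbove).det := by
  have hsq := det_submatrix_succAbove_sq_mul (by exact_mod_cast hN) _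
    (map_intCast_mul_transpose_eq_smul_one (R := ℚ) hM) j
  rw [submatrix_map, ← Int.cast_det] at hsq
  simp only [map_apply] at hsq
  have hsqZ : (M.submatrix id j.succAbove).det ^ 2 * N =
      N ^ (2 * m + 1) * (N - ∑ i, M i j ^ 2) := by
    exact_mod_cast hsq
  have hsq' : (M.submatrix id j.succAbove).det ^ 2 = (N ^ m) ^ 2 * (N - ∑ i, M i j ^ 2) :=
    mul_right_cancel₀ hN (by linear_combination hsqZ)
  exact (Int.pow_dvd_pow_iff two_ne_zero).mp ⟨_, hsq'⟩

end Matrix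

open Matrix

/-- For even `d` (here `d = n + 1`), if the rows of the `(d-1) × d` integer
matrix `M` are pairwise orthogonal of squared norm `N > 0`, then the vector
`w` with `w_j = (-1)^j N^{(2-d)/2} det M_{(j)}` has integer entries, is
orthogonal to every row of `M`, and has squared norm `N`. -/
theorem codim_one_vector (n : ℕ) (hd : Even (n + 1)) (N : ℤ) (hN : 0 < N)
    (M : Matrix (Fin n) (Fin (n + 1)) ℤ)
    (horth : ∀ i i' : Fin n, i ≠ i' → ∑ k, M i k * M i' k = 0)
    (hnorm : ∀ i : Fin n, ∑ k, (M i k) ^ 2 = N)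
    (w : Fin (n + 1) → ℚ)
    (hw : ∀ j : Fin (n + 1),
      w j = (-1) ^ (j : ℕ) * (N : ℚ) ^ (((2 : ℤ) - (n + 1)) / 2)
              * ((M.submatrix id j.succAbove).det : ℚ)) :
    (∀ j, ∃ z : ℤ, w j = (z : ℚ)) ∧
    (∀ i : Fin n, ∑ j, w j * (M i j : ℚ) = 0) ∧
    (∑ j, (w j) ^ 2 = (N : ℚ)) := by
  obtain ⟨m, rfl⟩ : ∃ m, n = 2 * m + 1 := by
    obtain ⟨r, hr⟩ := hd
    exact ⟨r - 1, by omega⟩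
  have hM : M * Mᵀ = N • 1 := by
    ext i i'
    rcases eq_or_ne i i' with rfl | h
    · simpa [mul_apply, sq] using hnorm i
    · simpa [mul_apply, h] using horth i i' h
  have hNq : (N : ℚ) ≠ 0 := by exact_mod_cast hN.ne'
  have hw' : ∀ j, w j = (-1) ^ (j : ℕ) * (M.submatrix id j.succAbove).det / (N : ℚ) ^ m := by
    intro j
    rw [hw j, show ((2 : ℤ) - ((2 * m + 1 : ℕ) + 1)) / 2 = -m by push_cast; omega,
      _root_.zpow_neg, zpow_natCast, div_eq_mul_inv]
    ring
  refine ⟨fun j => ?_, fun i => ?_, ?_⟩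
  · obtain ⟨t, ht⟩ := pow_dvd_det_submatrix_succAbove hN.ne' M hM j
    exact ⟨(-1) ^ (j : ℕ) * t, by rw [hw', ht]; push_cast; field_simp⟩
  · simp_rw [hw', div_mul_eq_mul_div, ← Finset.sum_div, mul_right_comm _ _ ((M i _ : ℤ) : ℚ)]
    exact div_eq_zero_iff.mpr
      (Or.inl (by exact_mod_cast sum_neg_one_pow_mul_det_submatrix_succAbove_eq_zero M i))
  · have hsum : ∑ j : Fin (2 * m + 1 + 1), ((M.submatrix id j.succAbove).det : ℚ) ^ 2 =
        (N : ℚ) ^ (2 * m + 1) := by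
      simpa only [submatrix_map, ← Int.cast_det] using
        sum_sq_det_submatrix_succAbove hNq _ (map_intCast_mul_transpose_eq_smul_one hM)
    have hw2 : ∀ j, w j ^ 2 =
        ((M.submatrix id j.succAbove).det : ℚ) ^ 2 / ((N : ℚ) ^ m) ^ 2 := by
      intro j
      rw [hw', div_pow, mul_pow, pow_right_comm (-1 : ℚ) (j : ℕ) 2, neg_one_sq, one_pow, one_mul]
    rw [Finset.sum_congr rfl fun j _ => hw2 j, ← Finset.sum_div, hsum]
    field_simp
    ring
end

section
/- For even d, every set of d-1 pairwise orthogonal vectors in ℤ^d of common squared norm N can be extended by one more vector in ℤ^d of squared norm N to an orthogonal basis of ℝ^d. -/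
open Matrix Finset

set_option linter.unusedSectionVars false

namespace ExtendCodimAux

variable {n : ℕ} {R : Type*} [CommRing R]

/-- matrix whose first `n` rows are `v` and last row is `x` -/
def mat (v : Fin n → Fin (n+1) → R) (x : Fin (n+1) → R) :
    Matrix (Fin (n+1)) (Fin (n+1)) R := Matrix.of (Fin.snoc v x)

@[simp] lemma mat_castSucc (v : Fin n → Fin (n+1) → R) (x) (i : Fin n) (j) :
    mat v x i.castSucc j = v i j := by simp [mat]

@[simp] lemma mat_last (v : Fin n → Fin (n+1) → R) (x) (j) :
    mat v x (Fin.last n) j = x j := by simp [mat]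

lemma mat_updateRow (v : Fin n → Fin (n+1) → R) (x y) :
    (mat v x).updateRow (Fin.last n) y = mat v y := by
  ext i j
  refine Fin.lastCases ?_ (fun i => ?_) i
  · simp
  · rw [Matrix.updateRow_ne (Fin.castSucc_lt_last i).ne]
    simp

/-- cofactors along the (absent) last row -/
def cof (v : Fin n → Fin (n+1) → R) : Fin (n+1) → R :=
  fun k => (mat v 0).adjugate k (Fin.last n)

lemma adjugate_mat (v : Fin n → Fin (n+1) → R) (x) (k) :
    (mat v x).adjugate k (Fin.last n) = cof v k := by
  rw [cof, Matrix.adjugate_apply, Matrix.adjugate_apply, mat_updateRow, mat_updateRow]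

lemma det_mat (v : Fin n → Fin (n+1) → R) (x) :
    (mat v x).det = ∑ k, x k * cof v k := by
  have h := congrFun (congrFun (Matrix.mul_adjugate (mat v x)) (Fin.last n)) (Fin.last n)
  rw [Matrix.mul_apply] at h
  simp only [adjugate_mat, mat_last, Matrix.smul_apply, Matrix.one_apply_eq,
    smul_eq_mul, mul_one] at h
  exact h.symm

lemma row_dot_cof (v : Fin n → Fin (n+1) → R) (i : Fin n) :
    ∑ k, v i k * cof v k = 0 := by
  have h := congrFun (congrFun (Matrix.mul_adjugate (mat v (0 : Fin (n+1) → R)))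
    i.castSucc) (Fin.last n)
  rw [Matrix.mul_apply] at h
  simp only [adjugate_mat, mat_castSucc, Matrix.smul_apply,
    Matrix.one_apply_ne (Fin.castSucc_lt_last i).ne, smul_eq_mul, mul_zero] at h
  exact h

lemma mat_map (v : Fin n → Fin (n+1) → ℤ) (x : Fin (n+1) → ℤ) :
    (Int.castRingHom ℚ).mapMatrix (mat v x)
      = mat (fun i k => (v i k : ℚ)) (fun k => (x k : ℚ)) := by
  ext i j
  refine Fin.lastCases ?_ (fun i => ?_) i <;> simp

lemma cof_cast (v : Fin n → Fin (n+1) → ℤ) (k) :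
    ((cof v k : ℤ) : ℚ) = cof (fun i k => (v i k : ℚ)) k := by
  have h := (Int.castRingHom ℚ).map_adjugate (mat v 0)
  have h2 := congrFun (congrFun h k) (Fin.last n)
  simp only [RingHom.mapMatrix_apply, Matrix.map_apply] at h2
  have hm : (mat v 0).map (Int.castRingHom ℚ) = mat (fun i k => (v i k : ℚ)) 0 := by
    ext i j
    refine Fin.lastCases ?_ (fun i => ?_) i <;> simp
  rw [cof, cof, ← hm]
  exact h2

end ExtendCodimAux

open ExtendCodimAux

/-- For even `d = n + 1`, every set of `d - 1` pairwise orthogonal vectors in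
`ℤ^d` of common squared norm `N > 0` can be extended by one more integer vector
of squared norm `N` orthogonal to all of them (hence to an orthogonal basis of
`ℝ^d`). -/
theorem extend_codim_one_even (n : ℕ) (hd : Even (n + 1)) (N : ℤ) (hN : 0 < N)
    (v : Fin n → Fin (n + 1) → ℤ)
    (horth : ∀ i i' : Fin n, i ≠ i' → ∑ k, v i k * v i' k = 0)
    (hnorm : ∀ i : Fin n, ∑ k, (v i k) ^ 2 = N) :
    ∃ w : Fin (n + 1) → ℤ,
      (∑ k, (w k) ^ 2 = N) ∧ ∀ i : Fin n, ∑ k, w k * v i k = 0 := by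
  classical
  obtain ⟨e, he⟩ : ∃ e, n = 2 * e + 1 := by
    have : Odd n := Nat.Even.sub_odd (by omega) hd odd_one
    exact this
  set u : Fin (n+1) → ℤ := cof v with hu
  have horthu : ∀ i, ∑ k, v i k * u k = 0 := fun i => row_dot_cof v i
  set vq : Fin n → Fin (n+1) → ℚ := fun i k => (v i k : ℚ) with hvq
  have hkey : ∀ i i' : Fin n, ∑ k, vq i k * vq i' k = if i = i' then (N:ℚ) else 0 := by
    intro i i'
    by_cases h : i = i'
    · subst h
      simp only [if_pos rfl, hvq]
      have h2 : ∑ k, v i k * v i k = N := by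
        rw [← hnorm i]; exact Finset.sum_congr rfl fun k _ => by ring
      exact_mod_cast h2
    · simp only [if_neg h, hvq]
      exact_mod_cast horth i i' h
  -- u ≠ 0
  have hune : ∃ k, u k ≠ 0 := by
    by_contra hcon
    push_neg at hcon
    have hcq : ∀ k, cof vq k = 0 := by
      intro k
      rw [← cof_cast]
      simp [← hu, hcon k]
    have hli : LinearIndependent ℚ vq := by
      rw [Fintype.linearIndependent_iff]
      intro g hg j
      have h1 : ∑ k, (∑ i, g i • vq i) k * vq j k = 0 := by rw [hg]; simp
      have h2 : ∑ k, (∑ i, g i • vq i) k * vq j k = g j * N := by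
        simp only [Finset.sum_apply, Pi.smul_apply, smul_eq_mul, Finset.sum_mul]
        rw [Finset.sum_comm]
        calc ∑ i, ∑ k, g i * vq i k * vq j k
            = ∑ i, g i * (if i = j then (N:ℚ) else 0) := by
              refine Finset.sum_congr rfl fun i _ => ?_
              rw [← hkey i j, Finset.mul_sum]
              exact Finset.sum_congr rfl fun k _ => by ring
          _ = g j * N := by simp
      rw [h1] at h2
      have hN0 : (N : ℚ) ≠ 0 := Int.cast_ne_zero.mpr hN.ne'
      exact (mul_eq_zero.mp h2.symm).resolve_right hN0
    have hsp : Submodule.span ℚ (Set.range vq) ≠ ⊤ := by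
      intro htop
      have hle := finrank_span_le_card (R := ℚ) (Set.range vq)
      rw [htop] at hle
      have h1 : Module.finrank ℚ (⊤ : Submodule ℚ (Fin (n+1) → ℚ)) = n + 1 := by
        rw [finrank_top]; simp
      have h2 : (Set.range vq).toFinset.card ≤ n := by
        refine le_trans ?_ (le_of_eq (Fintype.card_fin n))
        rw [Set.toFinset_range]
        exact Finset.card_image_le.trans (le_of_eq (by simp))
      omega
    have hex : ∃ x, x ∉ Submodule.span ℚ (Set.range vq) := by
      by_contra hcon2
      push_neg at hcon2
      exact hsp (Submodule.eq_top_iff'.mpr hcon2)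
    obtain ⟨x, hx⟩ := hex
    have hli2 : LinearIndependent ℚ (Fin.snoc vq x : Fin (n+1) → _) :=
      linearIndependent_fin_snoc.mpr ⟨hli, hx⟩
    have hunit : IsUnit (mat vq x) :=
      Matrix.linearIndependent_rows_iff_isUnit.mp hli2
    have hdet0 : (mat vq x).det ≠ 0 := by
      have := (Matrix.isUnit_iff_isUnit_det _).mp hunit
      exact isUnit_iff_ne_zero.mp this
    apply hdet0
    rw [det_mat]
    simp [hcq]
  -- squared norm of u
  set S : ℤ := ∑ k, u k * u k with hS
  have hSpos : 0 < S := by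
    obtain ⟨k0, hk0⟩ := hune
    refine Finset.sum_pos' (fun k _ => mul_self_nonneg _) ⟨k0, Finset.mem_univ _, ?_⟩
    exact mul_self_pos.mpr hk0
  have hPPT : mat v u * (mat v u)ᵀ = Matrix.diagonal (Fin.snoc (fun _ => N) S) := by
    ext i j
    rw [Matrix.mul_apply]
    simp only [Matrix.transpose_apply]
    refine Fin.lastCases ?_ (fun i' => ?_) i
    · refine Fin.lastCases ?_ (fun j' => ?_) j
      · simp [Matrix.diagonal_apply_eq, hS]
      · rw [Matrix.diagonal_apply_ne' _ (Fin.castSucc_lt_last j').ne]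
        simp only [mat_last, mat_castSucc]
        rw [← horthu j']
        exact Finset.sum_congr rfl fun k _ => by ring
    · refine Fin.lastCases ?_ (fun j' => ?_) j
      · rw [Matrix.diagonal_apply_ne _ (Fin.castSucc_lt_last i').ne]
        simp only [mat_last, mat_castSucc]
        exact horthu i'
      · simp only [mat_castSucc]
        by_cases h : i' = j'
        · subst h
          rw [Matrix.diagonal_apply_eq]
          rw [Fin.snoc_castSucc]
          rw [← hnorm i']
          exact Finset.sum_congr rfl fun k _ => by ring
        · rw [Matrix.diagonal_apply_ne _ (by simpa using h)]
          exact horth i' j' h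
  have hdetP : (mat v u).det = S := by
    rw [det_mat]
  have hSS : S * S = N ^ n * S := by
    have h1 : ((mat v u) * (mat v u)ᵀ).det = S * S := by
      rw [Matrix.det_mul, Matrix.det_transpose, hdetP]
    rw [hPPT, Matrix.det_diagonal, Fin.prod_univ_castSucc] at h1
    simp only [Fin.snoc_castSucc, Fin.snoc_last, Finset.prod_const, Finset.card_univ,
      Fintype.card_fin] at h1
    linarith [h1]
  have hSN : S = N ^ n := mul_right_cancel₀ hSpos.ne' (by rw [hSS])
  have hn : N ^ n = N ^ (2*e) * N := by rw [he]; ring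
  have hnq : (N:ℚ) ^ n = (N:ℚ) ^ (2*e) * (N:ℚ) := by exact_mod_cast congrArg (Int.cast : ℤ → ℚ) hn
  -- rational matrices
  set uq : Fin (n+1) → ℚ := fun k => (u k : ℚ) with huq
  set Q : Matrix (Fin (n+1)) (Fin (n+1)) ℚ := mat vq uq with hQdef
  have hQmap : (Int.castRingHom ℚ).mapMatrix (mat v u) = Q := mat_map v u
  have hQQ : Q * Qᵀ = Matrix.diagonal (Fin.snoc (fun _ => (N:ℚ)) ((N:ℚ)^n)) := by
    have h := congrArg ((Int.castRingHom ℚ).mapMatrix) hPPT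
    rw [_root_.map_mul] at h
    have ht : (Int.castRingHom ℚ).mapMatrix ((mat v u)ᵀ) = Qᵀ := by
      rw [← hQmap]; ext i j
      simp [Matrix.transpose_apply]
    rw [hQmap, ht] at h
    rw [h]
    ext i j
    simp only [RingHom.mapMatrix_apply, Matrix.map_apply]
    by_cases hij : i = j
    · subst hij
      rw [Matrix.diagonal_apply_eq, Matrix.diagonal_apply_eq]
      refine Fin.lastCases ?_ (fun i' => ?_) i
      · simp only [Fin.snoc_last]
        rw [hSN]; push_cast [map_pow]; simp
      · simp
    · rw [Matrix.diagonal_apply_ne _ hij, Matrix.diagonal_apply_ne _ hij]; simp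
  have hN0 : (N:ℚ) ≠ 0 := Int.cast_ne_zero.mpr hN.ne'
  have hdetQ : Q.det ≠ 0 := by
    intro h0
    have h1 : (Q * Qᵀ).det = 0 := by rw [Matrix.det_mul, h0, zero_mul]
    rw [hQQ, Matrix.det_diagonal, Fin.prod_univ_castSucc] at h1
    simp only [Fin.snoc_castSucc, Fin.snoc_last, Finset.prod_const, Finset.card_univ,
      Fintype.card_fin] at h1
    exact (mul_ne_zero (pow_ne_zero _ hN0) (pow_ne_zero _ hN0)) h1
  have hQunit : IsUnit Qᵀ := by
    rw [Matrix.isUnit_iff_isUnit_det, Matrix.det_transpose]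
    exact isUnit_iff_ne_zero.mpr hdetQ
  set D' : Matrix (Fin (n+1)) (Fin (n+1)) ℚ :=
    Matrix.diagonal (Fin.snoc (fun _ => (N:ℚ)^(2*e)) 1) with hD'
  have hmain : Qᵀ * (D' * Q) = ((N:ℚ)^n) • 1 := by
    refine hQunit.mul_right_cancel ?_
    calc Qᵀ * (D' * Q) * Qᵀ = Qᵀ * (D' * (Q * Qᵀ)) := by
          rw [Matrix.mul_assoc, Matrix.mul_assoc]
      _ = Qᵀ * (((N:ℚ)^n) • 1) := by
          rw [hQQ, hD', Matrix.diagonal_mul_diagonal]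
          have hfun : (fun i => Fin.snoc (fun _ => (N:ℚ)^(2*e)) 1 i
              * Fin.snoc (fun _ => (N:ℚ)) ((N:ℚ)^n) i) = fun _ : Fin (n+1) => (N:ℚ)^n := by
            funext i
            refine Fin.lastCases ?_ (fun i' => ?_) i
            · simp
            · simp only [Fin.snoc_castSucc]
              rw [hnq]
          rw [hfun, Matrix.smul_one_eq_diagonal]
      _ = (((N:ℚ)^n) • 1) * Qᵀ := by
          rw [Matrix.mul_smul, Matrix.smul_mul, Matrix.mul_one, Matrix.one_mul]
  have hdiag : ∀ k, N^(2*e) * (∑ i, (v i k)^2) + (u k)^2 = N ^ n := by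
    intro k
    have h := congrFun (congrFun hmain k) k
    rw [Matrix.mul_apply] at h
    simp only [Matrix.transpose_apply, hD', Matrix.diagonal_mul, Matrix.smul_apply,
      Matrix.one_apply_eq, smul_eq_mul, mul_one] at h
    rw [Fin.sum_univ_castSucc] at h
    simp only [Fin.snoc_castSucc, Fin.snoc_last, one_mul] at h
    have hQc : ∀ (i' : Fin n) (kk), Q i'.castSucc kk = (v i' kk : ℚ) := by
      intro i' kk; rw [hQdef]; exact mat_castSucc _ _ _ _
    have hQl : ∀ kk, Q (Fin.last n) kk = (u kk : ℚ) := by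
      intro kk; rw [hQdef]; exact mat_last _ _ _
    simp only [hQc, hQl] at h
    have hq : ((N^(2*e) * (∑ i, (v i k)^2) + (u k)^2 : ℤ) : ℚ) = ((N^n : ℤ) : ℚ) := by
      push_cast
      rw [Finset.mul_sum, ← h]
      congr 1
      · exact Finset.sum_congr rfl fun i _ => by ring
      · ring
    exact_mod_cast hq
  have hdvd : ∀ k, N^e ∣ u k := by
    intro k
    have h := hdiag k
    have h2 : (u k)^2 = (N^e)^2 * (N - ∑ i, (v i k)^2) := by
      linear_combination h + hn
    exact (Int.pow_dvd_pow_iff two_ne_zero).mp ⟨_, h2⟩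
  have hwex : ∀ k, ∃ c, u k = N^e * c := fun k => (hdvd k)
  choose w hw using hwex
  have h1 : ∑ k, u k * u k = N^n := by rw [← hS]; exact hSN
  refine ⟨w, ?_, ?_⟩
  · have hcan : N^(2*e) * (∑ k, w k^2) = N^(2*e) * N := by
      calc N^(2*e) * (∑ k, w k^2) = ∑ k, (N^e * w k) * (N^e * w k) := by
            rw [Finset.mul_sum]
            exact Finset.sum_congr rfl fun k _ => by ring
        _ = ∑ k, u k * u k := Finset.sum_congr rfl fun k _ => by rw [← hw k]
        _ = N^(2*e) * N := by rw [h1, hn]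
    exact mul_left_cancel₀ (pow_ne_zero _ hN.ne') hcan
  · intro i
    have h2 : N^e * (∑ k, w k * v i k) = 0 := by
      rw [Finset.mul_sum, ← horthu i]
      exact Finset.sum_congr rfl fun k _ => by rw [hw k]; ring
    exact (mul_eq_zero.mp h2).resolve_left (pow_ne_zero _ hN.ne')
end

section
/- If d is odd and N is a positive integer that is not a perfect square, then no set of d-1 pairwise orthogonal vectors in ℤ^d of common squared norm N can be extended by a vector in ℤ^d of squared norm N orthogonal to all of them. -/
/-- For odd `d = n + 1` and `N` not a perfect square, no set of `d - 1`
pairwise orthogonal vectors in `ℤ^d` of common squared norm `N` can be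
extended by an integer vector of squared norm `N` orthogonal to all of them. -/
theorem no_extension_odd_nonsquare (n : ℕ) (hd : Odd (n + 1)) (N : ℤ)
    (hN : 0 < N) (hsq : ¬∃ m : ℤ, N = m ^ 2)
    (v : Fin n → Fin (n + 1) → ℤ)
    (horth : ∀ i i' : Fin n, i ≠ i' → ∑ k, v i k * v i' k = 0)
    (hnorm : ∀ i : Fin n, ∑ k, (v i k) ^ 2 = N) :
    ¬∃ w : Fin (n + 1) → ℤ,
      (∑ k, (w k) ^ 2 = N) ∧ ∀ i : Fin n, ∑ k, w k * v i k = 0 := by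
  rintro ⟨w, hw, hworth⟩
  set M : Matrix (Fin (n+1)) (Fin (n+1)) ℤ := Matrix.of (Fin.cons w v) with hM
  have key : M * M.transpose = (N : ℤ) • 1 := by
    ext i j
    simp only [Matrix.mul_apply, Matrix.transpose_apply, Matrix.smul_apply,
      Matrix.one_apply, hM, Matrix.of_apply, smul_eq_mul]
    induction i using Fin.cases with
    | zero =>
      induction j using Fin.cases with
      | zero =>
        simp only [Fin.cons_zero, if_true, mul_one]
        rw [← hw]; exact Finset.sum_congr rfl fun k _ => (sq (w k)).symm
      | succ j =>
        have : (0 : Fin (n+1)) ≠ j.succ := (Fin.succ_ne_zero j).symm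
        simp only [Fin.cons_zero, Fin.cons_succ, if_neg this, mul_zero]
        exact hworth j
    | succ i =>
      induction j using Fin.cases with
      | zero =>
        simp only [Fin.cons_zero, Fin.cons_succ, if_neg (Fin.succ_ne_zero i), mul_zero]
        rw [← hworth i]
        exact Finset.sum_congr rfl fun k _ => mul_comm _ _
      | succ j =>
        simp only [Fin.cons_succ]
        by_cases h : i = j
        · subst h
          simp only [if_true, mul_one]
          rw [← hnorm i]; exact Finset.sum_congr rfl fun k _ => (sq (v i k)).symm
        · have : i.succ ≠ j.succ := fun hc => h (Fin.succ_injective _ hc)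
          simp only [if_neg this, mul_zero]
          exact horth i j h
  have hdet : (M.det) ^ 2 = N ^ (n + 1) := by
    have h1 : M.det ^ 2 = (M * M.transpose).det := by
      rw [Matrix.det_mul, Matrix.det_transpose, sq]
    rw [h1, key, Matrix.det_smul, Matrix.det_one, mul_one, Fintype.card_fin]
  obtain ⟨c, hc⟩ := hd
  obtain ⟨m, hm⟩ : Even n := ⟨c, by omega⟩
  have hnm : n = 2 * m := by omega
  have hk : M.det ^ 2 = N * (N ^ m) ^ 2 := by
    rw [hdet, hnm, ← pow_mul]; ring
  have hdvd : (N ^ m : ℤ) ∣ M.det := by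
    have h2 : (N ^ m) ^ 2 ∣ M.det ^ 2 := ⟨N, by linarith [hk]⟩
    exact (Int.pow_dvd_pow_iff two_ne_zero).mp h2
  obtain ⟨t, ht⟩ := hdvd
  apply hsq
  refine ⟨t, ?_⟩
  have hNm : (N : ℤ) ^ m ≠ 0 := pow_ne_zero _ hN.ne'
  have : (N ^ m) ^ 2 * N = (N ^ m) ^ 2 * t ^ 2 := by rw [ht] at hk; ring_nf; ring_nf at hk; linarith
  exact mul_left_cancel₀ (pow_ne_zero _ hNm) this
end

section
/- Let u ∈ {i, j, k} and let q be an integer quaternion such that q u conj(q) is primitive (its four integer coefficients have greatest common divisor 1). Then there exist integer quaternions q₁, q₂ such that q₁ q + q₂ q u = 2. -/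
/-!
The quaternion `P = q u q̄` is pure, and primitivity makes its three imaginary coordinates
coprime, so Bézout gives a pure `w` with `re (P w) = 1`. For pure `a`, `b` one has
`a b + b a = a b + star (a b) = 2 re (a b)`. Since `X = q̄ w q` is pure as well and `re` is
invariant under cyclic permutations, `u X + X u = 2 re (u q̄ w q) = 2 re (P w) = 2`,
that is, `q₁ = u q̄ w` and `q₂ = q̄ w` work.
-/

open Quaternion

/-- An integer quaternion is primitive if no integer `m > 1` divides all four of
its coefficients. -/
def QuatPrimitive (q : ℍ[ℤ]) : Prop :=
  ∀ m : ℤ, 1 < m → ¬(m ∣ q.re ∧ m ∣ q.imI ∧ m ∣ q.imJ ∧ m ∣ q.imK)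

theorem Int.exists_mul_add_mul_add_mul_eq_one {a b c : ℤ}
    (h : ∀ m : ℤ, 1 < m → ¬(m ∣ a ∧ m ∣ b ∧ m ∣ c)) :
    ∃ x y z : ℤ, x * a + y * b + z * c = 1 := by
  have hgcd : Int.gcd (Int.gcd a b) c = 1 := by
    by_contra hne
    obtain ⟨p, hp, hpg⟩ := Nat.exists_prime_and_dvd hne
    have hpg : (p : ℤ) ∣ Int.gcd (Int.gcd a b) c := Int.natCast_dvd_natCast.mpr hpg
    have hpab : (p : ℤ) ∣ Int.gcd a b := hpg.trans (Int.gcd_dvd_left _ _)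
    exact h p (by exact_mod_cast hp.one_lt) ⟨hpab.trans (Int.gcd_dvd_left _ _),
      hpab.trans (Int.gcd_dvd_right _ _), hpg.trans (Int.gcd_dvd_right _ _)⟩
  obtain ⟨s, t, hst⟩ := Int.isCoprime_iff_gcd_eq_one.mpr hgcd
  refine ⟨s * Int.gcdA a b, s * Int.gcdB a b, t, ?_⟩
  rw [Int.gcd_eq_gcd_ab a b] at hst
  linear_combination hst

namespace Quaternion

section CommRing

variable {R : Type*} [CommRing R]

theorem re_mul_comm (a b : ℍ[R]) : (a * b).re = (b * a).re := by
  simp only [re_mul]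
  ring

theorem mul_add_mul_eq_two_re {a b : ℍ[R]} (ha : star a = -a) (hb : star b = -b) :
    a * b + b * a = 2 * ((a * b).re : ℍ[R]) := by
  have h : star (a * b) = b * a := by rw [star_mul, ha, hb, neg_mul_neg]
  rw [← self_add_star, h]

theorem star_mul_mul_star_of_star_eq_neg {w : ℍ[R]} (hw : star w = -w) (q : ℍ[R]) :
    star (q * w * star q) = -(q * w * star q) := by
  rw [star_mul, star_mul, star_star, hw]
  noncomm_ring

theorem re_mul_star_mul_mul (u w q : ℍ[R]) :
    (u * (star q * w * q)).re = (q * u * star q * w).re := by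
  rw [← mul_assoc, ← mul_assoc, re_mul_comm]
  simp only [mul_assoc]

end CommRing

theorem exists_star_eq_neg_re_mul_eq_one {P : ℍ[ℤ]} (hP : P.re = 0) (hprim : QuatPrimitive P) :
    ∃ w : ℍ[ℤ], star w = -w ∧ (P * w).re = 1 := by
  obtain ⟨x, y, z, hxyz⟩ := Int.exists_mul_add_mul_add_mul_eq_one
    fun m hm ⟨hx, hy, hz⟩ => hprim m hm ⟨by rw [hP]; exact dvd_zero m, hx, hy, hz⟩
  refine ⟨⟨0, -x, -y, -z⟩, star_eq_neg.mpr rfl, ?_⟩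
  rw [re_mul P ⟨0, -x, -y, -z⟩, hP]
  linear_combination hxyz

end Quaternion

/-- If `u ∈ {i, j, k}` and `q u conj q` is primitive, then there are integer
quaternions `q₁, q₂` with `q₁ q + q₂ q u = 2`. -/
theorem quat_bezout (u q : ℍ[ℤ])
    (hu : u = ⟨0, 1, 0, 0⟩ ∨ u = ⟨0, 0, 1, 0⟩ ∨ u = ⟨0, 0, 0, 1⟩)
    (hprim : QuatPrimitive (q * u * star q)) :
    ∃ q₁ q₂ : ℍ[ℤ], q₁ * q + q₂ * q * u = 2 := by
  have hu_pure : star u = -u := star_eq_neg.mpr (by rcases hu with rfl | rfl | rfl <;> rfl)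
  have hP : (q * u * star q).re = 0 :=
    star_eq_neg.mp (star_mul_mul_star_of_star_eq_neg hu_pure q)
  obtain ⟨w, hw_pure, hw⟩ := exists_star_eq_neg_re_mul_eq_one hP hprim
  have hX : star (star q * w * q) = -(star q * w * q) := by
    simpa only [star_star] using star_mul_mul_star_of_star_eq_neg hw_pure (star q)
  refine ⟨u * star q * w, star q * w, ?_⟩
  calc u * star q * w * q + star q * w * q * u
      = u * (star q * w * q) + star q * w * q * u := by simp only [mul_assoc]
    _ = 2 * ((u * (star q * w * q)).re : ℍ[ℤ]) := mul_add_mul_eq_two_re hu_pure hX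
    _ = 2 := by rw [re_mul_star_mul_mul, hw, Int.cast_one, mul_one]
end

section
/- Let q = a + bi + cj + dk be an integer quaternion such that q i conj(q) is primitive. Then the Gaussian integers a + bi and c - di are coprime in ℤ[i]. -/
/-!
Write `z = a + bi` and `w = c - di`. The coefficients of `q i q̄` are `0`, `|z|² - |w|²` and
`2 Im (z w̄)`, `-2 Re (z w̄)`. If a Gaussian integer `g` of norm `N(g) = g ḡ > 1` divides both `z`
and `w`, then `N(g)` divides `z z̄`, `w w̄` and `z w̄` in `ℤ[i]`, hence divides all four
coefficients, so `q i q̄` is not primitive.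
-/

open Quaternion

theorem Quaternion.mk_mul_i_mul_star_mk {R : Type*} [CommRing R] (a b c d : R) :
    (⟨a, b, c, d⟩ : ℍ[R]) * ⟨0, 1, 0, 0⟩ * star ⟨a, b, c, d⟩ =
      ⟨0, a ^ 2 + b ^ 2 - c ^ 2 - d ^ 2, 2 * (a * d + b * c), 2 * (b * d - a * c)⟩ := by
  ext <;> simp <;> ring

theorem Zsqrtd.norm_dvd_mul_star {d : ℤ} {g z w : ℤ√d} (hz : g ∣ z) (hw : g ∣ w) :
    (g.norm : ℤ√d) ∣ z * star w := by
  rw [norm_eq_mul_conj]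
  exact mul_dvd_mul hz (map_dvd (starRingEnd _) hw)

theorem Zsqrtd.one_lt_norm {d : ℤ} (hd : d < 0) {g : ℤ√d} (hg : ¬IsUnit g) (hg0 : g ≠ 0) :
    1 < g.norm := by
  have hnonneg := norm_nonneg hd.le g
  have hne_one := (norm_eq_one_iff' hd.le g).not.mpr hg
  have hne_zero := (norm_eq_zero_iff hd g).not.mpr hg0
  omega

theorem GaussianInt.exists_one_lt_norm_dvd_of_not_isCoprime {z w : GaussianInt}
    (h : ¬IsCoprime z w) : ∃ g : GaussianInt, 1 < g.norm ∧ g ∣ z ∧ g ∣ w := by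
  by_cases hzero : z = 0 ∧ w = 0
  · exact ⟨⟨1, 1⟩, by decide, by simp [hzero]⟩
  · obtain ⟨p, hp, hpz, hpw⟩ : ∃ p : GaussianInt, Prime p ∧ p ∣ z ∧ p ∣ w := by
      by_contra! H
      exact h (isCoprime_of_prime_dvd hzero H)
    exact ⟨p, Zsqrtd.one_lt_norm (by norm_num) hp.not_isUnit hp.ne_zero, hpz, hpw⟩

/-- If `q = a + bi + cj + dk` is an integer quaternion with `q i conj q`
primitive, then the Gaussian integers `a + bi` and `c - di` are coprime. -/
theorem gaussian_coprime_of_primitive (a b c d : ℤ) (q : ℍ[ℤ])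
    (hq : q = ⟨a, b, c, d⟩)
    (hprim : QuatPrimitive (q * ⟨0, 1, 0, 0⟩ * star q)) :
    IsCoprime (⟨a, b⟩ : GaussianInt) (⟨c, -d⟩ : GaussianInt) := by
  by_contra h
  obtain ⟨g, hg, hgz, hgw⟩ := GaussianInt.exists_one_lt_norm_dvd_of_not_isCoprime h
  have hzz := (Zsqrtd.intCast_dvd _ _).mp (Zsqrtd.norm_dvd_mul_star hgz hgz)
  have hww := (Zsqrtd.intCast_dvd _ _).mp (Zsqrtd.norm_dvd_mul_star hgw hgw)
  have hzw := (Zsqrtd.intCast_dvd _ _).mp (Zsqrtd.norm_dvd_mul_star hgz hgw)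
  simp only [Zsqrtd.re_mul, Zsqrtd.im_mul, Zsqrtd.re_star, Zsqrtd.im_star] at hzz hww hzw
  -- The statement's `ℍ[ℤ]` is built on `Int.instNegInt`, not on `CommRing ℤ`, so the lemma
  -- matches it only up to instance unfolding.
  rw [hq] at hprim
  erw [Quaternion.mk_mul_i_mul_star_mk] at hprim
  refine hprim g.norm hg ⟨dvd_zero _, ?_, ?_, ?_⟩ <;> dsimp only
  · exact (dvd_sub hzz.1 hww.1).trans (dvd_of_eq (by ring))
  · exact (hzw.2.mul_left 2).trans (dvd_of_eq (by ring))
  · exact (hzw.1.mul_left (-2)).trans (dvd_of_eq (by ring))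
end

section
/- If a, b ∈ ℤ³ are orthogonal vectors with ‖a‖² = ‖b‖² = N, then N is representable as a sum of two squares of integers. -/
/-!
Two coordinates of the cross product `a ×₃ b` exhibit `N (a₀² + b₀²)` as a sum of two squares.
By the prime-factorization criterion, an integer quotient of a sum of two squares by a nonzero
sum of two squares is again a sum of two squares, which applies to `N` unless `a₀ = b₀ = 0`, in
which case `N = a₁² + a₂²` directly.
-/

open Matrix

theorem Nat.sq_add_sq_of_mul_sq_add_sq {n s : ℕ} (hs : s ≠ 0)
    (hns : ∃ x y : ℕ, n * s = x ^ 2 + y ^ 2) (hss : ∃ u v : ℕ, s = u ^ 2 + v ^ 2) :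
    ∃ x y : ℕ, n = x ^ 2 + y ^ 2 := by
  rcases eq_or_ne n 0 with rfl | hn
  · exact ⟨0, 0, rfl⟩
  rw [Nat.eq_sq_add_sq_iff] at *
  intro q hq hq3
  have hqp := prime_of_mem_primeFactors hq
  have := Fact.mk hqp
  have hvs : Even (padicValNat q s) := by
    by_cases hd : q ∣ s
    · exact hss q (mem_primeFactors.2 ⟨hqp, hd, hs⟩) hq3
    · simp [padicValNat.eq_zero_of_not_dvd hd]
  have hvns := hns q (mem_primeFactors.2
    ⟨hqp, dvd_mul_of_dvd_left (dvd_of_mem_primeFactors hq) s, mul_ne_zero hn hs⟩) hq3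
  rw [padicValNat.mul hn hs] at hvns
  exact (Nat.even_add.1 hvns).2 hvs

theorem Int.sq_add_sq_of_mul_sq_add_sq {n s : ℤ} (hs : s ≠ 0)
    (hns : ∃ x y : ℤ, n * s = x ^ 2 + y ^ 2) (hss : ∃ u v : ℤ, s = u ^ 2 + v ^ 2) :
    ∃ x y : ℤ, n = x ^ 2 + y ^ 2 := by
  obtain ⟨x, y, hxy⟩ := hns
  obtain ⟨u, v, huv⟩ := hss
  have hs_pos : 0 < s := lt_of_le_of_ne (huv ▸ by positivity) hs.symm
  have hn_nonneg : 0 ≤ n := nonneg_of_mul_nonneg_left (hxy ▸ by positivity) hs_pos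
  lift n to ℕ using hn_nonneg
  lift s to ℕ using hs_pos.le
  obtain ⟨x', y', h⟩ := Nat.sq_add_sq_of_mul_sq_add_sq (n := n) (s := s) (by omega)
    ⟨x.natAbs, y.natAbs, by zify; simpa using hxy⟩ ⟨u.natAbs, v.natAbs, by zify; simpa using huv⟩
  exact ⟨x', y', by exact_mod_cast h⟩

/-- With `c = a ×₃ b` we have `‖c‖² = N²` and `c ⊥ a, b`, so `a, b, c` are orthogonal rows of norms
`√N, √N, N`; orthogonality of the first column gives `N (a₀² + b₀²) + c₀² = N²`. -/
theorem mul_sq_add_sq_eq_cross_sq {R : Type*} [CommRing R] {N : R} {a b : Fin 3 → R}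
    (horth : ∑ i, a i * b i = 0) (ha : ∑ i, a i ^ 2 = N) (hb : ∑ i, b i ^ 2 = N) :
    N * (a 0 ^ 2 + b 0 ^ 2) = (a ⨯₃ b) 1 ^ 2 + (a ⨯₃ b) 2 ^ 2 := by
  simp only [Fin.sum_univ_three] at horth ha hb
  simp only [cross_apply, cons_val_zero, cons_val_one, cons_val_two, head_cons, tail_cons]
  linear_combination -(a 0) ^ 2 * hb - (b 0) ^ 2 * ha + 2 * (a 0) * (b 0) * horth

theorem sum_two_squares_of_orthogonal_pair_general (N : ℤ)
    (a b : Fin 3 → ℤ)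
    (horth : ∑ i, a i * b i = 0)
    (ha : ∑ i, (a i) ^ 2 = N) (hb : ∑ i, (b i) ^ 2 = N) :
    ∃ x y : ℤ, N = x ^ 2 + y ^ 2 := by
  by_cases h0 : a 0 ^ 2 + b 0 ^ 2 = 0
  · have ha0 : a 0 = 0 := pow_eq_zero_iff two_ne_zero |>.1 (by nlinarith [sq_nonneg (b 0)])
    rw [Fin.sum_univ_three, ha0] at ha
    exact ⟨a 1, a 2, by rw [← ha]; ring⟩
  · exact Int.sq_add_sq_of_mul_sq_add_sq h0
      ⟨_, _, mul_sq_add_sq_eq_cross_sq horth ha hb⟩ ⟨a 0, b 0, rfl⟩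

/-- If `a, b ∈ ℤ³` are orthogonal vectors with `‖a‖² = ‖b‖² = N > 0`, then `N`
is a sum of two squares. -/
theorem sum_two_squares_of_orthogonal_pair (N : ℤ) (hN : 0 < N)
    (a b : Fin 3 → ℤ)
    (horth : ∑ i, a i * b i = 0)
    (ha : ∑ i, (a i) ^ 2 = N) (hb : ∑ i, (b i) ^ 2 = N) :
    ∃ x y : ℤ, N = x ^ 2 + y ^ 2 :=
  sum_two_squares_of_orthogonal_pair_general N a b horth ha hb
end

section
/- If N is a perfect square, then every vector a ∈ ℤ³ with ‖a‖² = N can be completed with two further vectors in ℤ³ of squared norm N to an orthogonal basis of ℝ³. -/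
/-!
Dividing `a` by the gcd of its coordinates we may assume `a` primitive, and after permuting
coordinates that `a 0` is odd; then `a 1`, `a 2` are even and `n` is odd (squares mod 4), so
`a = (2k - n, 2g, 2h)` with `g² + h² = k (n - k)`. A prime `p ≡ 3 mod 4` is a Gaussian prime, so if
it divided both `k` and `n - k` it would divide `h + g i`, hence every coordinate of `a`. Therefore
`h + g i` factors as `α β̄` with `|α|² = k` and `|β|² = n - k`, and `a` is the first row of the
Euler–Rodrigues matrix of the quaternion `q = α + β j`, whose rows are pairwise orthogonal of
squared length `|q|⁴ = n²`.
-/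

open Matrix

local notation "ℤ[i]" => GaussianInt

namespace GaussianInt

theorem prime_of_norm_eq_prime {π : ℤ[i]} {p : ℕ} (hp : p.Prime) (hπ : π.norm = p) :
    Prime π := by
  refine irreducible_iff_prime.mp ⟨fun hu => ?_, fun a b hab => ?_⟩
  · have := Zsqrtd.norm_eq_one_iff.mpr hu
    simp [hπ, hp.ne_one] at this
  · have hab' : (a.norm.natAbs * b.norm.natAbs).Prime := by
      rwa [← Int.natAbs_mul, ← Zsqrtd.norm_mul, ← hab, hπ, Int.natAbs_natCast]
    simp only [← Zsqrtd.norm_eq_one_iff]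
    rcases Nat.prime_mul_iff.mp hab' with h | h
    exacts [Or.inr h.2, Or.inl h.2]

theorem exists_prime_norm_eq {p : ℕ} (hp : p.Prime) (hp4 : p % 4 ≠ 3) :
    ∃ π : ℤ[i], Prime π ∧ π.norm = p := by
  have := Fact.mk hp
  obtain ⟨u, v, huv⟩ := Nat.Prime.sq_add_sq hp4
  have hnorm : (⟨u, v⟩ : ℤ[i]).norm = p := by rw [Zsqrtd.norm_def, ← huv]; push_cast; ring
  exact ⟨_, prime_of_norm_eq_prime hp hnorm, hnorm⟩

theorem dvd_or_star_dvd_of_dvd_norm {π w : ℤ[i]} (hπ : Prime π) (h : π ∣ (w.norm : ℤ[i])) :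
    π ∣ w ∨ star π ∣ w := by
  rw [Zsqrtd.norm_eq_mul_conj] at h
  exact (hπ.dvd_or_dvd h).imp id fun h' => by
    simpa [starRingEnd_apply] using map_dvd (starRingEnd ℤ[i]) h'

theorem natCast_dvd_of_dvd_norm {p : ℕ} (hp : p.Prime) (hp4 : p % 4 = 3) {w : ℤ[i]}
    (h : (p : ℤ) ∣ w.norm) : (p : ℤ[i]) ∣ w := by
  have := Fact.mk hp
  have hdvd : (p : ℤ[i]) ∣ (w.norm : ℤ[i]) := by
    exact_mod_cast (Zsqrtd.intCast_dvd_intCast (d := -1) _ _).mpr h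
  simpa using dvd_or_star_dvd_of_dvd_norm (prime_of_nat_prime_of_mod_four_eq_three p hp4) hdvd

theorem exists_dvd_norm_dvd {w : ℤ[i]} {A B : ℕ} (hw : w.norm = A * B) (hA : 1 < A)
    (hcop : ∀ p : ℕ, p.Prime → p % 4 = 3 → p ∣ A → ¬p ∣ B) :
    ∃ ρ : ℤ[i], ∃ m : ℕ, ρ ∣ w ∧ ρ.norm = m ∧ 1 < m ∧ m ∣ A := by
  set p := A.minFac
  have hp : p.Prime := Nat.minFac_prime hA.ne'
  have hpA : p ∣ A := A.minFac_dvd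
  have hpw : (p : ℤ) ∣ w.norm := hw ▸ (Int.natCast_dvd_natCast.mpr hpA).mul_right _
  by_cases hp4 : p % 4 = 3
  · obtain ⟨w', rfl⟩ := natCast_dvd_of_dvd_norm hp hp4 hpw
    refine ⟨p, p ^ 2, dvd_mul_right _ _, by simp [Zsqrtd.norm_natCast, sq], ?_, ?_⟩
    · nlinarith [hp.two_le]
    · have hAB : p ^ 2 ∣ A * B := by
        rw [← Int.natCast_dvd_natCast]
        refine ⟨w'.norm, ?_⟩
        rw [Nat.cast_mul, ← hw, Zsqrtd.norm_mul, Zsqrtd.norm_natCast]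
        push_cast
        ring
      exact ((hp.coprime_iff_not_dvd.mpr (hcop p hp hp4 hpA)).pow_left 2).dvd_of_dvd_mul_right hAB
  · obtain ⟨π, hπ, hπp⟩ := exists_prime_norm_eq hp hp4
    have hπp' : π ∣ ((p : ℤ) : ℤ[i]) := ⟨star π, by rw [← Zsqrtd.norm_eq_mul_conj, hπp]⟩
    have hπw : π ∣ (w.norm : ℤ[i]) := hπp'.trans ((Zsqrtd.intCast_dvd_intCast _ _).mpr hpw)
    rcases dvd_or_star_dvd_of_dvd_norm hπ hπw with h | h
    · exact ⟨π, p, h, hπp, hp.one_lt, hpA⟩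
    · exact ⟨star π, p, h, by rw [Zsqrtd.norm_conj, hπp], hp.one_lt, hpA⟩

theorem exists_mul_eq_of_norm_eq_mul {A B : ℕ} (hA : 0 < A)
    (hcop : ∀ p : ℕ, p.Prime → p % 4 = 3 → p ∣ A → ¬p ∣ B) (w : ℤ[i]) (hw : w.norm = A * B) :
    ∃ α β : ℤ[i], w = α * β ∧ α.norm = A ∧ β.norm = B := by
  induction A using Nat.strong_induction_on generalizing w with
  | _ A ih =>
  obtain rfl | hA1 := Nat.eq_or_lt_of_le hA
  · exact ⟨1, w, (one_mul w).symm, by simp, by simpa using hw⟩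
  obtain ⟨ρ, m, ⟨w', rfl⟩, hρ, hm, A', rfl⟩ := exists_dvd_norm_dvd hw hA1 hcop
  have hw' : w'.norm = A' * B := by
    refine mul_left_cancel₀ (show (m : ℤ) ≠ 0 by positivity) ?_
    rw [← hρ, ← Zsqrtd.norm_mul, hw, hρ]
    push_cast
    ring
  have hA' : 0 < A' := Nat.pos_of_mul_pos_left hA
  obtain ⟨α, β, rfl, hα, hβ⟩ := ih A' (lt_mul_left hA' hm) hA'
    (fun p hp hp4 hpA' => hcop p hp hp4 (hpA'.mul_left m)) w' hw'
  exact ⟨ρ * α, β, (mul_assoc ..).symm, by rw [Zsqrtd.norm_mul, hρ, hα]; push_cast; rfl, hβ⟩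

end GaussianInt

theorem exists_sq_add_sq_eq_of_sq_add_sq_eq_mul {k m : ℕ} {x y : ℤ}
    (hxy : x ^ 2 + y ^ 2 = k * m)
    (hprim : ∀ d : ℤ, d ∣ k → d ∣ m → d ∣ x → d ∣ y → IsUnit d) :
    ∃ a b c d : ℤ, a ^ 2 + b ^ 2 = k ∧ c ^ 2 + d ^ 2 = m ∧ a * c + b * d = x ∧
      b * c - a * d = y := by
  rcases Nat.eq_zero_or_pos k with rfl | hk
  · obtain ⟨rfl, rfl⟩ := mul_self_add_mul_self_eq_zero.mp (by simpa [sq] using hxy)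
    have hm : m = 1 := by
      have := Int.isUnit_iff.mp (hprim m (dvd_zero _) dvd_rfl (dvd_zero _) (dvd_zero _))
      omega
    exact ⟨0, 0, 1, 0, by simp, by simp [hm], by ring, by ring⟩
  rcases Nat.eq_zero_or_pos m with rfl | hm
  · obtain ⟨rfl, rfl⟩ := mul_self_add_mul_self_eq_zero.mp (by simpa [sq] using hxy)
    have hk : k = 1 := by
      have := Int.isUnit_iff.mp (hprim k dvd_rfl (dvd_zero _) (dvd_zero _) (dvd_zero _))
      omega
    exact ⟨1, 0, 0, 0, by simp [hk], by simp, by ring, by ring⟩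
  have hnorm : (⟨x, y⟩ : ℤ[i]).norm = k * m := by rw [Zsqrtd.norm_def]; linear_combination hxy
  have hcop : ∀ p : ℕ, p.Prime → p % 4 = 3 → p ∣ k → ¬p ∣ m := by
    intro p hp hp4 hpk hpm
    have hpw := GaussianInt.natCast_dvd_of_dvd_norm hp hp4
      (hnorm ▸ (Int.natCast_dvd_natCast.mpr hpk).mul_right _)
    rw [← Int.cast_natCast, Zsqrtd.intCast_dvd] at hpw
    exact (Nat.prime_iff_prime_int.mp hp).not_isUnit <| hprim p
      (Int.natCast_dvd_natCast.mpr hpk) (Int.natCast_dvd_natCast.mpr hpm) hpw.1 hpw.2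
  obtain ⟨α, γ, hw, hα, hγ⟩ := GaussianInt.exists_mul_eq_of_norm_eq_mul hk hcop _ hnorm
  rw [Zsqrtd.norm_def] at hα hγ
  have hre := congrArg Zsqrtd.re hw
  have him := congrArg Zsqrtd.im hw
  simp only [Zsqrtd.re_mul, Zsqrtd.im_mul] at hre him
  exact ⟨α.re, α.im, γ.re, -γ.im, by linear_combination hα, by linear_combination hγ,
    by linear_combination -hre, by linear_combination -him⟩

theorem Int.sq_emod_four (t : ℤ) : t ^ 2 % 4 = t % 2 := by
  obtain ⟨s, rfl | rfl⟩ := Int.even_or_odd' t <;> ring_nf <;> omega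

/-- Row `r` holds the coordinates of `q̄ e_r q`, where `q = a + b i + c j + d k` and
`(e₀, e₁, e₂) = (i, j, k)`. -/
def eulerRodrigues {R : Type*} [CommRing R] (a b c d : R) : Matrix (Fin 3) (Fin 3) R :=
  !![a ^ 2 + b ^ 2 - c ^ 2 - d ^ 2, 2 * (b * c - a * d), 2 * (b * d + a * c);
     2 * (b * c + a * d), a ^ 2 - b ^ 2 + c ^ 2 - d ^ 2, 2 * (c * d - a * b);
     2 * (b * d - a * c), 2 * (c * d + a * b), a ^ 2 - b ^ 2 - c ^ 2 + d ^ 2]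

theorem eulerRodrigues_mul_transpose {R : Type*} [CommRing R] (a b c d : R) :
    eulerRodrigues a b c d * (eulerRodrigues a b c d)ᵀ =
      (a ^ 2 + b ^ 2 + c ^ 2 + d ^ 2) ^ 2 • 1 := by
  ext i j
  fin_cases i <;> fin_cases j <;>
    simp [eulerRodrigues, mul_apply, Fin.sum_univ_three] <;> ring

theorem exists_eulerRodrigues_row_zero_eq {v : Fin 3 → ℤ} {n : ℤ} (hn : 0 ≤ n)
    (hv : ∑ i, v i ^ 2 = n ^ 2) (hprim : ∀ d : ℤ, (∀ i, d ∣ v i) → IsUnit d)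
    (hodd : Odd (v 0)) :
    ∃ a b c d : ℤ, a ^ 2 + b ^ 2 + c ^ 2 + d ^ 2 = n ∧ eulerRodrigues a b c d 0 = v := by
  rw [Fin.sum_univ_three] at hv
  have := Int.sq_emod_four (v 0); have := Int.sq_emod_four (v 1)
  have := Int.sq_emod_four (v 2); have := Int.sq_emod_four n
  have := Int.odd_iff.mp hodd
  obtain ⟨k, hk⟩ : ∃ k, v 0 = 2 * k - n := ⟨(v 0 + n) / 2, by omega⟩
  obtain ⟨g, hg⟩ : ∃ g, v 1 = 2 * g := ⟨v 1 / 2, by omega⟩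
  obtain ⟨h, hh⟩ : ∃ h, v 2 = 2 * h := ⟨v 2 / 2, by omega⟩
  rw [hk, hg, hh] at hv
  have hkm : h ^ 2 + g ^ 2 = k * (n - k) :=
    Int.eq_of_mul_eq_mul_left four_ne_zero (by linear_combination hv)
  have hk0 : 0 ≤ k := by nlinarith
  have hkn : 0 ≤ n - k := by nlinarith
  lift k to ℕ using hk0
  obtain ⟨m, hm⟩ := Int.eq_ofNat_of_zero_le hkn
  rw [hm] at hkm
  obtain ⟨a, b, c, d, hab, hcd, hh', hg'⟩ := exists_sq_add_sq_eq_of_sq_add_sq_eq_mul hkm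
    fun p hpk hpm hph hpg => hprim p fun i => by
      fin_cases i
      · simpa [hk, show 2 * (k : ℤ) - n = k - m by omega] using hpk.sub hpm
      · simpa [hg] using hpg.mul_left 2
      · simpa [hh] using hph.mul_left 2
  refine ⟨a, b, c, d, by linear_combination hab + hcd - hm, ?_⟩
  ext j
  fin_cases j <;> simp [eulerRodrigues]
  · linear_combination hab - hcd + hm - hk
  · linear_combination 2 * hg' - hg
  · linear_combination 2 * hh' - hh

theorem exists_matrix_row_zero_eq_of_primitive {v : Fin 3 → ℤ} {n : ℤ}
    (hv : ∑ i, v i ^ 2 = n ^ 2) (hprim : ∀ d : ℤ, (∀ i, d ∣ v i) → IsUnit d) :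
    ∃ M : Matrix (Fin 3) (Fin 3) ℤ, M 0 = v ∧ M * Mᵀ = n ^ 2 • 1 := by
  obtain ⟨i, hi⟩ : ∃ i, Odd (v i) := by
    by_contra! h
    simp only [Int.not_odd_iff_even, even_iff_two_dvd] at h
    exact absurd (Int.isUnit_iff.mp (hprim 2 h)) (by norm_num)
  set σ := Equiv.swap 0 i
  obtain ⟨a, b, c, d, hsum, hrow⟩ := exists_eulerRodrigues_row_zero_eq (v := v ∘ σ)
    (abs_nonneg n) (by simpa [sq_abs] using (Equiv.sum_comp σ (v · ^ 2)).trans hv)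
    (fun d hd => hprim d fun j => by simpa [σ] using hd (σ j)) (by simpa [σ] using hi)
  refine ⟨(eulerRodrigues a b c d).submatrix id σ, ?_, ?_⟩
  · ext j
    simp [hrow, σ]
  · rw [transpose_submatrix, submatrix_mul_transpose_submatrix, eulerRodrigues_mul_transpose,
      hsum, sq_abs]

theorem exists_matrix_row_zero_eq {v : Fin 3 → ℤ} {n : ℤ} (hv : ∑ i, v i ^ 2 = n ^ 2) :
    ∃ M : Matrix (Fin 3) (Fin 3) ℤ, M 0 = v ∧ M * Mᵀ = n ^ 2 • 1 := by
  obtain ⟨v', hv', hgcd⟩ := Finset.univ.extract_gcd v Finset.univ_nonempty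
  set g := Finset.univ.gcd v
  rcases eq_or_ne g 0 with hg | hg
  · obtain rfl : v = 0 := funext fun i => by simp [hv' i (Finset.mem_univ i), hg]
    obtain rfl : n = 0 := pow_eq_zero_iff two_ne_zero |>.mp (by simpa using hv.symm)
    exact ⟨0, rfl, by simp⟩
  have hsum : g ^ 2 * ∑ i, v' i ^ 2 = n ^ 2 := by
    rw [← hv, Finset.mul_sum]
    simp [hv', mul_pow]
  obtain ⟨n', rfl⟩ : g ∣ n := (Int.pow_dvd_pow_iff two_ne_zero).mp ⟨_, hsum.symm⟩
  obtain ⟨M, hM0, hM⟩ := exists_matrix_row_zero_eq_of_primitive (v := v') (n := n')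
    (mul_left_cancel₀ (pow_ne_zero 2 hg) (by rw [hsum]; ring))
    (fun d hd => isUnit_of_dvd_one (hgcd ▸ Finset.dvd_gcd fun i _ => hd i))
  refine ⟨g • M, by ext i; simp [hM0, hv'], ?_⟩
  rw [transpose_smul, smul_mul, Matrix.mul_smul, hM, smul_smul, smul_smul, mul_pow, ← sq]

theorem complete_basis_dim3_square_general (n : ℤ)
    (a : Fin 3 → ℤ) (ha : ∑ i, (a i) ^ 2 = n ^ 2) :
    ∃ b c : Fin 3 → ℤ,
      (∑ i, (b i) ^ 2 = n ^ 2) ∧ (∑ i, (c i) ^ 2 = n ^ 2) ∧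
      (∑ i, a i * b i = 0) ∧ (∑ i, b i * c i = 0) ∧ (∑ i, c i * a i = 0) := by
  obtain ⟨M, rfl, hM⟩ := exists_matrix_row_zero_eq ha
  have hM' (i j : Fin 3) : ∑ k, M i k * M j k = if i = j then n ^ 2 else 0 := by
    simpa [mul_apply, one_apply] using congrFun (congrFun hM i) j
  refine ⟨M 1, M 2, ?_, ?_, ?_, ?_, ?_⟩ <;> simp [sq, hM']

/-- If `N = n²` is a positive perfect square, then every `a ∈ ℤ³` with
`‖a‖² = N` can be completed with two further integer vectors of squared norm
`N` to an orthogonal basis of `ℝ³`. -/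
theorem complete_basis_dim3_square (n : ℤ) (hn : 0 < n)
    (a : Fin 3 → ℤ) (ha : ∑ i, (a i) ^ 2 = n ^ 2) :
    ∃ b c : Fin 3 → ℤ,
      (∑ i, (b i) ^ 2 = n ^ 2) ∧ (∑ i, (c i) ^ 2 = n ^ 2) ∧
      (∑ i, a i * b i = 0) ∧ (∑ i, b i * c i = 0) ∧ (∑ i, c i * a i = 0) :=
  complete_basis_dim3_square_general n a ha
end

section
/- Let d ≡ 2 (mod 4) with d ≥ 6 and let N be a positive integer not representable as a sum of two squares. Then there exists a set of d-2 pairwise orthogonal vectors in ℤ^d of common squared norm N that cannot be extended by another vector in ℤ^d of squared norm N orthogonal to all of them. -/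
/-- The quaternion matrix whose rows (and columns) are pairwise orthogonal
with common squared norm `a² + b² + c² + e²`. -/
def Qm (a b c e : ℤ) : Fin 4 → Fin 4 → ℤ :=
  ![![a, b, c, e], ![-b, a, -e, c], ![-c, e, a, -b], ![-e, -c, b, a]]

lemma Qm_row (a b c e : ℤ) (r r' : Fin 4) :
    ∑ s, Qm a b c e r s * Qm a b c e r' s =
      if r = r' then a ^ 2 + b ^ 2 + c ^ 2 + e ^ 2 else 0 := by
  fin_cases r <;> fin_cases r' <;>
    simp [Qm, Fin.sum_univ_four] <;> ring

lemma Qm_col (a b c e : ℤ) (g : Fin 4 → ℤ)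
    (h : ∀ r, ∑ s, g s * Qm a b c e r s = 0)
    (hne : a ^ 2 + b ^ 2 + c ^ 2 + e ^ 2 ≠ 0) : ∀ s, g s = 0 := by
  have h0 := h 0; have h1 := h 1; have h2 := h 2; have h3 := h 3
  simp [Qm, Fin.sum_univ_four] at h0 h1 h2 h3
  intro s
  have key : (a ^ 2 + b ^ 2 + c ^ 2 + e ^ 2) * g s = 0 := by
    fin_cases s
    · show (a ^ 2 + b ^ 2 + c ^ 2 + e ^ 2) * g 0 = 0
      linear_combination a * h0 - b * h1 - c * h2 - e * h3
    · show (a ^ 2 + b ^ 2 + c ^ 2 + e ^ 2) * g 1 = 0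
      linear_combination b * h0 + a * h1 + e * h2 - c * h3
    · show (a ^ 2 + b ^ 2 + c ^ 2 + e ^ 2) * g 2 = 0
      linear_combination c * h0 - e * h1 + a * h2 + b * h3
    · show (a ^ 2 + b ^ 2 + c ^ 2 + e ^ 2) * g 3 = 0
      linear_combination e * h0 + c * h1 - b * h2 + a * h3
  rcases mul_eq_zero.1 key with h' | h'
  · exact absurd h' hne
  · exact h'

/-- For `d ≡ 2 (mod 4)`, `d ≥ 6`, and `N` not a sum of two squares, there is a
set of `d - 2` pairwise orthogonal vectors in `ℤ^d` of common squared norm `N`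
that cannot be extended by another integer vector of squared norm `N`
orthogonal to all of them. -/
theorem non_extendable_dim_2_mod_4 (d : ℕ) (hd : d % 4 = 2) (hd6 : 6 ≤ d)
    (N : ℤ) (hN : 0 < N) (hsum : ¬∃ x y : ℤ, N = x ^ 2 + y ^ 2) :
    ∃ v : Fin (d - 2) → Fin d → ℤ,
      (∀ i i' : Fin (d - 2), i ≠ i' → ∑ j, v i j * v i' j = 0) ∧
      (∀ i : Fin (d - 2), ∑ j, (v i j) ^ 2 = N) ∧
      ¬∃ u : Fin d → ℤ,
        (∑ j, (u j) ^ 2 = N) ∧ ∀ i : Fin (d - 2), ∑ j, u j * v i j = 0 := by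
  -- Lagrange's four squares theorem
  obtain ⟨a, b, c, e, habce⟩ : ∃ a b c e : ℤ, a ^ 2 + b ^ 2 + c ^ 2 + e ^ 2 = N := by
    obtain ⟨a, b, c, e, h⟩ := Nat.sum_four_squares N.toNat
    refine ⟨a, b, c, e, ?_⟩
    have h2 : (a : ℤ) ^ 2 + (b : ℤ) ^ 2 + (c : ℤ) ^ 2 + (e : ℤ) ^ 2 = (N.toNat : ℤ) := by
      exact_mod_cast h
    rwa [Int.toNat_of_nonneg hN.le] at h2
  have hNne : a ^ 2 + b ^ 2 + c ^ 2 + e ^ 2 ≠ 0 := by rw [habce]; exact hN.ne'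
  set m : ℕ := (d - 2) / 4 with hm
  have hd2 : d - 2 = m * 4 := by omega
  have hdd : d = 2 + m * 4 := by omega
  -- index equivalences
  let e1 : Fin (d - 2) ≃ Fin m × Fin 4 := (finCongr hd2).trans finProdFinEquiv.symm
  let e2 : Fin d ≃ Fin 2 ⊕ (Fin m × Fin 4) :=
    ((finCongr hdd).trans finSumFinEquiv.symm).trans
      ((Equiv.refl (Fin 2)).sumCongr finProdFinEquiv.symm)
  -- the block-diagonal family of vectors
  let w : (Fin m × Fin 4) → (Fin 2 ⊕ Fin m × Fin 4) → ℤ := fun pr x =>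
    Sum.elim (fun _ => 0) (fun ps => if pr.1 = ps.1 then Qm a b c e pr.2 ps.2 else 0) x
  -- the key sum computation
  have wsum : ∀ (pr pr' : Fin m × Fin 4),
      ∑ x : Fin 2 ⊕ Fin m × Fin 4, w pr x * w pr' x =
        if pr.1 = pr'.1 then
          (if pr.2 = pr'.2 then a ^ 2 + b ^ 2 + c ^ 2 + e ^ 2 else 0) else 0 := by
    rintro ⟨p, r⟩ ⟨p', r'⟩
    rw [Fintype.sum_sum_type]
    simp only [w, Sum.elim_inl, Sum.elim_inr, mul_zero, zero_mul,
      Finset.sum_const_zero, zero_add]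
    rw [Fintype.sum_prod_type]
    have hterm : ∀ p'' : Fin m,
        (∑ s : Fin 4, (if p = p'' then Qm a b c e r s else 0) *
          (if p' = p'' then Qm a b c e r' s else 0)) =
        if p = p'' then (if p = p' then ∑ s, Qm a b c e r s * Qm a b c e r' s else 0)
          else 0 := by
      intro p''
      rcases eq_or_ne p p'' with h1 | h1
      · subst h1
        rcases eq_or_ne p p' with h2 | h2
        · subst h2; simp
        · simp [Ne.symm h2, h2]
      · rw [if_neg h1]
        apply Finset.sum_eq_zero; intro s _
        rw [if_neg h1, zero_mul]
    rw [Finset.sum_congr rfl fun p'' _ => hterm p'', Finset.sum_ite_eq]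
    simp only [Finset.mem_univ, if_true]
    rcases eq_or_ne p p' with h | h
    · simp [h, Qm_row]
    · simp [h]
  refine ⟨fun i j => w (e1 i) (e2 j), ?_, ?_, ?_⟩
  · -- pairwise orthogonality
    intro i i' hne
    have hs : ∑ j : Fin d, w (e1 i) (e2 j) * w (e1 i') (e2 j) =
        ∑ x : Fin 2 ⊕ Fin m × Fin 4, w (e1 i) x * w (e1 i') x :=
      Equiv.sum_comp e2 (fun x => w (e1 i) x * w (e1 i') x)
    rw [hs, wsum]
    rcases eq_or_ne (e1 i).1 (e1 i').1 with h | h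
    · have h2 : (e1 i).2 ≠ (e1 i').2 := by
        intro hr
        exact hne (e1.injective (Prod.ext h hr))
      simp [h, h2]
    · simp [h]
  · -- norms
    intro i
    have hs : ∑ j : Fin d, (w (e1 i) (e2 j)) ^ 2 =
        ∑ x : Fin 2 ⊕ Fin m × Fin 4, (w (e1 i) x) ^ 2 :=
      Equiv.sum_comp e2 (fun x => (w (e1 i) x) ^ 2)
    rw [hs]
    have hsq : ∑ x : Fin 2 ⊕ Fin m × Fin 4, (w (e1 i) x) ^ 2 =
        ∑ x : Fin 2 ⊕ Fin m × Fin 4, w (e1 i) x * w (e1 i) x :=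
      Finset.sum_congr rfl fun x _ => sq (w (e1 i) x)
    rw [hsq, wsum]
    simp [habce]
  · -- non-extendability
    rintro ⟨u, hu, horth⟩
    set U : Fin 2 ⊕ Fin m × Fin 4 → ℤ := u ∘ e2.symm with hU
    have hUe2 : ∀ j, u j = U (e2 j) := by intro j; simp [hU]
    -- the orthogonality relations in block form
    have hblock : ∀ (p : Fin m) (r : Fin 4),
        ∑ s : Fin 4, U (Sum.inr (p, s)) * Qm a b c e r s = 0 := by
      intro p r
      have hi := horth (e1.symm (p, r))
      have hsum2 : ∑ j : Fin d, u j * w (e1 (e1.symm (p, r))) (e2 j) =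
          ∑ x : Fin 2 ⊕ Fin m × Fin 4, U x * w (p, r) x := by
        rw [e1.apply_symm_apply]
        calc ∑ j : Fin d, u j * w (p, r) (e2 j)
            = ∑ j : Fin d, U (e2 j) * w (p, r) (e2 j) :=
              Finset.sum_congr rfl fun j _ => by rw [← hUe2]
          _ = _ := Equiv.sum_comp e2 (fun x => U x * w (p, r) x)
      rw [hsum2] at hi
      rw [Fintype.sum_sum_type] at hi
      simp only [w, Sum.elim_inl, Sum.elim_inr, mul_zero, Finset.sum_const_zero,
        zero_add] at hi
      rw [Fintype.sum_prod_type] at hi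
      have hterm : ∀ p'' : Fin m,
          (∑ s : Fin 4, U (Sum.inr (p'', s)) * (if p = p'' then Qm a b c e r s else 0)) =
          if p = p'' then ∑ s : Fin 4, U (Sum.inr (p, s)) * Qm a b c e r s else 0 := by
        intro p''
        rcases eq_or_ne p p'' with h1 | h1
        · subst h1; simp
        · rw [if_neg h1]
          apply Finset.sum_eq_zero; intro s _
          rw [if_neg h1, mul_zero]
      rw [Finset.sum_congr rfl fun p'' _ => hterm p'', Finset.sum_ite_eq] at hi
      simpa using hi
    -- hence U vanishes on the blocks
    have hzero : ∀ (p : Fin m) (s : Fin 4), U (Sum.inr (p, s)) = 0 := fun p =>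
      Qm_col a b c e (fun s => U (Sum.inr (p, s))) (hblock p) hNne
    -- so N is a sum of two squares, contradiction
    apply hsum
    refine ⟨U (Sum.inl 0), U (Sum.inl 1), ?_⟩
    have h1 : ∑ j : Fin d, (u j) ^ 2 = ∑ x : Fin 2 ⊕ Fin m × Fin 4, (U x) ^ 2 := by
      calc ∑ j : Fin d, (u j) ^ 2 = ∑ j : Fin d, (U (e2 j)) ^ 2 :=
            Finset.sum_congr rfl fun j _ => by rw [← hUe2]
        _ = _ := Equiv.sum_comp e2 (fun x => (U x) ^ 2)
    rw [h1, Fintype.sum_sum_type] at hu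
    have h2 : ∑ x : Fin m × Fin 4, (U (Sum.inr x)) ^ 2 = 0 := by
      apply Finset.sum_eq_zero
      rintro ⟨p, s⟩ _
      rw [hzero p s]; ring
    rw [h2, add_zero, Fin.sum_univ_two] at hu
    linarith
end
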